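/- Let n≥2 and let S_n be the symmetric group on n letters, generated by the set T_n of all transpositions. Then the Cayley graph of (S_n, T_n) satisfies CD(0, n(n−1)): for every function f:S_n→ℝ and every x∈S_n, Γ₂f(x) ≥ (1/(n(n−1)))·(Δf(x))², where Δf(x)=∑_{τ∈T_n}(f(x·τ)−f(x)), Γf(x)=(1/2)∑_{τ∈T_n}(f(x·τ)−f(x))², Γ(f,g)(x)=(1/2)∑_{τ∈T_n}(f(x·τ)−f(x))(g(x·τ)−g(x)), and Γ₂f=(1/2)Δ(Γf)−Γ(f,Δf). -/

import Mathlib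

open scoped Classical

noncomputable section SymmOps

/-- The set of all transpositions in the symmetric group `S_n`. -/
def transpositions (n : ℕ) : Finset (Equiv.Perm (Fin n)) :=
  Finset.univ.filter fun τ : Equiv.Perm (Fin n) => τ.IsSwap

/-- The Laplacian on the Cayley graph of `(S_n, T_n)`:
`Δf(x) = ∑_{τ ∈ T_n} (f(x·τ) - f(x))`. -/
def lapT (n : ℕ) (f : Equiv.Perm (Fin n) → ℝ) (x : Equiv.Perm (Fin n)) : ℝ :=
  ∑ τ ∈ transpositions n, (f (x * τ) - f x)

/-- `Γf(x) = (1/2) ∑_{τ ∈ T_n} (f(x·τ) - f(x))²`. -/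
def gammaT (n : ℕ) (f : Equiv.Perm (Fin n) → ℝ) (x : Equiv.Perm (Fin n)) : ℝ :=
  (1 / 2) * ∑ τ ∈ transpositions n, (f (x * τ) - f x) ^ 2

/-- `Γ(f,g)(x) = (1/2) ∑_{τ ∈ T_n} (f(x·τ) - f(x)) (g(x·τ) - g(x))`. -/
def gammaBilT (n : ℕ) (f g : Equiv.Perm (Fin n) → ℝ) (x : Equiv.Perm (Fin n)) : ℝ :=
  (1 / 2) * ∑ τ ∈ transpositions n, (f (x * τ) - f x) * (g (x * τ) - g x)

/-- `Γ₂ f = (1/2) Δ (Γ f) - Γ(f, Δ f)`. -/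
def gamma2T (n : ℕ) (f : Equiv.Perm (Fin n) → ℝ) (x : Equiv.Perm (Fin n)) : ℝ :=
  (1 / 2) * lapT n (gammaT n f) x - gammaBilT n f (lapT n f) x

end SymmOps

/-!
Writing `F g = f (x * g) - f x`, one has `4 Γ₂ f(x) = ∑_{s,t ∈ S} Q(s,t)` for an explicit
quadratic form `Q` in `F s`, `F t`, `F (s t)`. When `S` is closed under conjugation,
`(s, t) ↦ (s t s⁻¹, s)` is a bijection of `S × S` preserving the product `s t`, and symmetrizing
along it turns the sum into `∑_{s,t} (F (s t) - F s - F t)²`. If moreover every generator is an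
involution, the diagonal terms alone give `4 ∑_s (F s)²`, so `Γ₂ f ≥ ∑_s (F s)² ≥ (Δ f)² / |S|`
by Cauchy–Schwarz. The transpositions form such a set, with `|T_n| ≤ n (n - 1)`.
-/

open Finset

noncomputable section

namespace CayleyGraph

variable {G : Type*} [Group G] (S : Finset G)

def grad (f : G → ℝ) (x g : G) : ℝ := f (x * g) - f x

def lap (f : G → ℝ) (x : G) : ℝ := ∑ s ∈ S, grad f x s

def gamma (f : G → ℝ) (x : G) : ℝ := (1 / 2) * ∑ s ∈ S, grad f x s ^ 2

def gammaBil (f g : G → ℝ) (x : G) : ℝ := (1 / 2) * ∑ s ∈ S, grad f x s * grad g x s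

def gamma2 (f : G → ℝ) (x : G) : ℝ := (1 / 2) * lap S (gamma S f) x - gammaBil S f (lap S f) x

theorem four_mul_gamma2_eq (f : G → ℝ) (x : G) :
    4 * gamma2 S f x = ∑ s ∈ S, ∑ t ∈ S,
      (grad f x (s * t) ^ 2 - 4 * grad f x s * grad f x (s * t) + 3 * grad f x s ^ 2
        - grad f x t ^ 2 + 2 * grad f x s * grad f x t) := by
  simp only [gamma2, gammaBil, lap, gamma, grad, mul_sum, ← sum_sub_distrib, mul_assoc]
  refine sum_congr rfl fun s _ => sum_congr rfl fun t _ => ?_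
  ring

variable {S}

theorem sum_sum_mul_conj (hS : ∀ g : G, ∀ s ∈ S, g * s * g⁻¹ ∈ S) (φ : G → G → ℝ) :
    ∑ s ∈ S, ∑ t ∈ S, φ s (s * t) = ∑ s ∈ S, ∑ t ∈ S, φ t (s * t) := by
  rw [← sum_product' S S (fun s t => φ s (s * t)), ← sum_product' S S (fun s t => φ t (s * t))]
  refine sum_nbij' (fun p => (p.1 * p.2 * p.1⁻¹, p.1)) (fun p => (p.2, p.2⁻¹ * p.1 * p.2))
    ?_ ?_ ?_ ?_ ?_
  · rintro ⟨s, t⟩ hst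
    obtain ⟨hs, ht⟩ := mem_product.mp hst
    exact mem_product.mpr ⟨hS s t ht, hs⟩
  · rintro ⟨a, b⟩ hab
    obtain ⟨ha, hb⟩ := mem_product.mp hab
    refine mem_product.mpr ⟨hb, ?_⟩
    simpa using hS b⁻¹ a ha
  · rintro ⟨s, t⟩ -
    simp only [Prod.mk.injEq, true_and]
    group
  · rintro ⟨a, b⟩ -
    simp only [Prod.mk.injEq, and_true]
    group
  · rintro ⟨s, t⟩ -
    simp

theorem four_mul_gamma2_eq_sum_sq (hS : ∀ g : G, ∀ s ∈ S, g * s * g⁻¹ ∈ S)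
    (f : G → ℝ) (x : G) :
    4 * gamma2 S f x = ∑ s ∈ S, ∑ t ∈ S, (grad f x (s * t) - grad f x s - grad f x t) ^ 2 := by
  rw [four_mul_gamma2_eq, ← sub_eq_zero, ← sum_sub_distrib]
  set F := grad f x
  have hcross : ∑ s ∈ S, ∑ t ∈ S, F s * F (s * t) = ∑ s ∈ S, ∑ t ∈ S, F t * F (s * t) :=
    sum_sum_mul_conj hS fun a b => F a * F b
  have hsq : ∑ s ∈ S, ∑ t ∈ S, F s ^ 2 = ∑ s ∈ S, ∑ t ∈ S, F t ^ 2 := sum_comm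
  calc ∑ s ∈ S, (_ - _)
      = ∑ s ∈ S, ∑ t ∈ S, (2 * (F t * F (s * t) - F s * F (s * t)) + 2 * (F s ^ 2 - F t ^ 2)) := by
        refine sum_congr rfl fun s _ => ?_
        rw [← sum_sub_distrib]
        exact sum_congr rfl fun t _ => by ring
    _ = 2 * (∑ s ∈ S, ∑ t ∈ S, F t * F (s * t) - ∑ s ∈ S, ∑ t ∈ S, F s * F (s * t))
          + 2 * (∑ s ∈ S, ∑ t ∈ S, F s ^ 2 - ∑ s ∈ S, ∑ t ∈ S, F t ^ 2) := by
        simp only [mul_sub, mul_sum, sum_add_distrib, sum_sub_distrib]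
    _ = 0 := by rw [hcross, hsq]; ring

theorem gamma2_nonneg (hS : ∀ g : G, ∀ s ∈ S, g * s * g⁻¹ ∈ S) (f : G → ℝ) (x : G) :
    0 ≤ gamma2 S f x := by
  have h := four_mul_gamma2_eq_sum_sq hS f x
  have : 0 ≤ 4 * gamma2 S f x := h ▸ sum_nonneg fun _ _ => sum_nonneg fun _ _ => sq_nonneg _
  linarith

theorem sum_sq_grad_le_gamma2 (hS : ∀ g : G, ∀ s ∈ S, g * s * g⁻¹ ∈ S)
    (hinv : ∀ s ∈ S, s * s = 1) (f : G → ℝ) (x : G) :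
    ∑ s ∈ S, grad f x s ^ 2 ≤ gamma2 S f x := by
  have hdiag : ∀ s ∈ S, 4 * grad f x s ^ 2
      ≤ ∑ t ∈ S, (grad f x (s * t) - grad f x s - grad f x t) ^ 2 := by
    intro s hs
    have hzero : grad f x (s * s) = 0 := by simp [grad, hinv s hs]
    calc 4 * grad f x s ^ 2 = (grad f x (s * s) - grad f x s - grad f x s) ^ 2 := by
          rw [hzero]; ring
      _ ≤ _ := single_le_sum (f := fun t => (grad f x (s * t) - grad f x s - grad f x t) ^ 2)
          (fun _ _ => sq_nonneg _) hs
  have := sum_le_sum hdiag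
  rw [← mul_sum, ← four_mul_gamma2_eq_sum_sq hS] at this
  linarith

theorem sq_lap_le_card_mul_gamma2 (hS : ∀ g : G, ∀ s ∈ S, g * s * g⁻¹ ∈ S)
    (hinv : ∀ s ∈ S, s * s = 1) (f : G → ℝ) (x : G) :
    lap S f x ^ 2 ≤ #S * gamma2 S f x :=
  sq_sum_le_card_mul_sum_sq.trans <|
    mul_le_mul_of_nonneg_left (sum_sq_grad_le_gamma2 hS hinv f x) (Nat.cast_nonneg _)

end CayleyGraph

end

theorem Equiv.Perm.IsSwap.conj {α : Type*} [DecidableEq α] {σ : Equiv.Perm α} (h : σ.IsSwap)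
    (g : Equiv.Perm α) : (g * σ * g⁻¹).IsSwap := by
  obtain ⟨a, b, hab, rfl⟩ := h
  exact ⟨g a, g b, g.injective.ne hab, (Equiv.swap_apply_apply g a b).symm⟩

theorem mem_transpositions {n : ℕ} {τ : Equiv.Perm (Fin n)} :
    τ ∈ transpositions n ↔ τ.IsSwap := by
  simp [transpositions]

theorem conj_mem_transpositions (n : ℕ) :
    ∀ g : Equiv.Perm (Fin n), ∀ τ ∈ transpositions n, g * τ * g⁻¹ ∈ transpositions n :=
  fun g _ hτ => mem_transpositions.mpr ((mem_transpositions.mp hτ).conj g)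

theorem mul_self_of_mem_transpositions (n : ℕ) :
    ∀ τ ∈ transpositions n, τ * τ = 1 := by
  intro τ hτ
  obtain ⟨a, b, -, rfl⟩ := mem_transpositions.mp hτ
  exact Equiv.swap_mul_self a b

theorem card_transpositions_le (n : ℕ) : (#(transpositions n) : ℝ) ≤ n * (n - 1) := by
  have hsub : transpositions n ⊆
      (univ.offDiag).image fun p : Fin n × Fin n => Equiv.swap p.1 p.2 := by
    intro τ hτ
    obtain ⟨a, b, hab, rfl⟩ := mem_transpositions.mp hτ
    exact mem_image.mpr ⟨(a, b), by simpa using hab, rfl⟩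
  have hcard : #(transpositions n) ≤ n * n - n := by
    simpa using (card_le_card hsub).trans card_image_le
  calc (#(transpositions n) : ℝ) ≤ ((n * n - n : ℕ) : ℝ) := by exact_mod_cast hcard
    _ = n * (n - 1) := by rw [Nat.cast_sub (Nat.le_mul_self n)]; push_cast; ring

theorem symmetric_group_CD_general (n : ℕ)
    (f : Equiv.Perm (Fin n) → ℝ) (x : Equiv.Perm (Fin n)) :
    (1 / ((n : ℝ) * (n - 1))) * (lapT n f x) ^ 2 ≤ gamma2T n f x := by
  have hS := conj_mem_transpositions n
  have hγ : 0 ≤ gamma2T n f x := CayleyGraph.gamma2_nonneg hS f x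
  have hcard := card_transpositions_le n
  rw [one_div_mul_eq_div]
  -- for `n ≤ 1` the denominator is `0` and the left side is the junk value `_ / 0 = 0`
  refine div_le_of_le_mul₀ ((Nat.cast_nonneg _).trans hcard) hγ ?_
  calc lapT n f x ^ 2 ≤ #(transpositions n) * gamma2T n f x :=
        CayleyGraph.sq_lap_le_card_mul_gamma2 hS (mul_self_of_mem_transpositions n) f x
    _ ≤ n * (n - 1) * gamma2T n f x := mul_le_mul_of_nonneg_right hcard hγ
    _ = gamma2T n f x * (n * (n - 1)) := mul_comm _ _

/-- The Cayley graph of the symmetric group `S_n` (`n ≥ 2`) with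
the set `T_n` of all transpositions as generating set satisfies `CD(0, n(n-1))`:
`Γ₂ f(x) ≥ (1/(n(n-1))) (Δf(x))²`. -/
theorem symmetric_group_CD (n : ℕ) (hn : 2 ≤ n)
    (f : Equiv.Perm (Fin n) → ℝ) (x : Equiv.Perm (Fin n)) :
    (1 / ((n : ℝ) * (n - 1))) * (lapT n f x) ^ 2 ≤ gamma2T n f x :=
  symmetric_group_CD_general n f x
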